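/- arXiv:1203.4426 — 5 statements merged into one kernel-verified Lean document; each statement's English description precedes it below -/
import Mathlib

section
/- Let m : Ω → S² ⊂ ℝ³ be a smooth map on an open set Ω ⊂ ℝ². Then the vorticity satisfies ω(m) = 3 m3 J(m) + curl(m2 m3 ∇m1 − m1 m3 ∇m2), where curl of a vector field v = (v1, v2) on ℝ² is ∂₁v2 − ∂₂v1. -/
noncomputable def d1 {E : Type*} [NormedAddCommGroup E] [NormedSpace ℝ E]
    (f : ℝ × ℝ → E) (x : ℝ × ℝ) : E := fderiv ℝ f x (1, 0)

noncomputable def d2 {E : Type*} [NormedAddCommGroup E] [NormedSpace ℝ E]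
    (f : ℝ × ℝ → E) (x : ℝ × ℝ) : E := fderiv ℝ f x (0, 1)

/-- The vorticity `ω(m) = ⟨m, ∂₁m × ∂₂m⟩`. -/
noncomputable def vorticity (m1 m2 m3 : ℝ × ℝ → ℝ) (x : ℝ × ℝ) : ℝ :=
  m1 x * (d1 m2 x * d2 m3 x - d1 m3 x * d2 m2 x)
    + m2 x * (d1 m3 x * d2 m1 x - d1 m1 x * d2 m3 x)
    + m3 x * (d1 m1 x * d2 m2 x - d1 m2 x * d2 m1 x)

/-- The planar Jacobian `J(m)`. -/
noncomputable def planarJac (m1 m2 : ℝ × ℝ → ℝ) (x : ℝ × ℝ) : ℝ :=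
  d1 m1 x * d2 m2 x - d2 m1 x * d1 m2 x

/-- `curl (v1, v2) = ∂₁ v2 − ∂₂ v1` for a planar vector field. -/
noncomputable def curl2 (v1 v2 : ℝ × ℝ → ℝ) (x : ℝ × ℝ) : ℝ := d1 v2 x - d2 v1 x

lemma fderiv_mul_apply' {f g : ℝ × ℝ → ℝ} {x v} (hf : DifferentiableAt ℝ f x)
    (hg : DifferentiableAt ℝ g x) :
    fderiv ℝ (fun y => f y * g y) x v = f x * fderiv ℝ g x v + g x * fderiv ℝ f x v := by
  rw [fderiv_fun_mul hf hg]
  simp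

lemma diff_fderiv_apply {f : ℝ × ℝ → ℝ} {x} (hf : ContDiffAt ℝ 2 f x) (v : ℝ × ℝ) :
    DifferentiableAt ℝ (fun y => fderiv ℝ f y v) x :=
  ((hf.fderiv_right (le_refl 2)).differentiableAt one_ne_zero).clm_apply (differentiableAt_const v)

lemma d_comm {f : ℝ × ℝ → ℝ} {x} (hf : ContDiffAt ℝ 2 f x) :
    fderiv ℝ (fun y => fderiv ℝ f y (0, 1)) x (1, 0)
      = fderiv ℝ (fun y => fderiv ℝ f y (1, 0)) x (0, 1) := by
  have hdf : DifferentiableAt ℝ (fderiv ℝ f) x :=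
    (hf.fderiv_right (le_refl 2)).differentiableAt one_ne_zero
  have h1 : ∀ v : ℝ × ℝ, fderiv ℝ (fun y => fderiv ℝ f y v) x =
      (fderiv ℝ (fderiv ℝ f) x).flip v := by
    intro v
    rw [fderiv_clm_apply hdf (differentiableAt_const v)]
    simp
  rw [h1, h1]
  simpa using hf.isSymmSndFDerivAt (by simp) (1,0) (0,1)

lemma fderiv_comb_apply {a b c p q r : ℝ × ℝ → ℝ} {x v}
    (ha : DifferentiableAt ℝ a x) (hb : DifferentiableAt ℝ b x)
    (hc : DifferentiableAt ℝ c x) (hp : DifferentiableAt ℝ p x)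
    (hq : DifferentiableAt ℝ q x) (hr : DifferentiableAt ℝ r x) :
    fderiv ℝ (fun y => a y * b y * c y - p y * q y * r y) x v =
      a x * b x * fderiv ℝ c x v + c x * (a x * fderiv ℝ b x v + b x * fderiv ℝ a x v)
      - (p x * q x * fderiv ℝ r x v + r x * (p x * fderiv ℝ q x v + q x * fderiv ℝ p x v)) := by
  rw [fderiv_fun_sub (f := fun y => a y * b y * c y) (g := fun y => p y * q y * r y)
    ((ha.mul hb).mul hc) ((hp.mul hq).mul hr)]
  rw [ContinuousLinearMap.sub_apply,
    fderiv_mul_apply' (f := fun y => a y * b y) (ha.mul hb) hc,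
    fderiv_mul_apply' (f := fun y => p y * q y) (hp.mul hq) hr,
    fderiv_mul_apply' ha hb, fderiv_mul_apply' hp hq]

/-- `ω(m) = 3 m3 J(m) + curl (m2 m3 ∇m1 − m1 m3 ∇m2)` pointwise on `Ω`. -/
theorem vorticity_decomposition
    (Ω : Set (ℝ × ℝ)) (hΩ : IsOpen Ω) (m1 m2 m3 : ℝ × ℝ → ℝ)
    (hm1 : ContDiffOn ℝ (⊤ : ℕ∞) m1 Ω) (hm2 : ContDiffOn ℝ (⊤ : ℕ∞) m2 Ω) (hm3 : ContDiffOn ℝ (⊤ : ℕ∞) m3 Ω)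
    (hsph : ∀ x ∈ Ω, m1 x ^ 2 + m2 x ^ 2 + m3 x ^ 2 = 1) :
    ∀ x ∈ Ω,
      vorticity m1 m2 m3 x
        = 3 * m3 x * planarJac m1 m2 x
          + curl2 (fun y => m2 y * m3 y * d1 m1 y - m1 y * m3 y * d1 m2 y)
              (fun y => m2 y * m3 y * d2 m1 y - m1 y * m3 y * d2 m2 y) x := by
  intro x hx
  have h1 : ContDiffAt ℝ 2 m1 x := (hm1.contDiffAt (hΩ.mem_nhds hx)).of_le (WithTop.coe_le_coe.mpr le_top)
  have h2 : ContDiffAt ℝ 2 m2 x := (hm2.contDiffAt (hΩ.mem_nhds hx)).of_le (WithTop.coe_le_coe.mpr le_top)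
  have h3 : ContDiffAt ℝ 2 m3 x := (hm3.contDiffAt (hΩ.mem_nhds hx)).of_le (WithTop.coe_le_coe.mpr le_top)
  have d1' : DifferentiableAt ℝ m1 x := h1.differentiableAt two_ne_zero
  have d2' : DifferentiableAt ℝ m2 x := h2.differentiableAt two_ne_zero
  have d3' : DifferentiableAt ℝ m3 x := h3.differentiableAt two_ne_zero
  simp only [vorticity, planarJac, curl2, d1, d2]
  rw [fderiv_comb_apply d2' d3' (diff_fderiv_apply h1 _) d1' d3' (diff_fderiv_apply h2 _),
      fderiv_comb_apply d2' d3' (diff_fderiv_apply h1 _) d1' d3' (diff_fderiv_apply h2 _),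
      d_comm h1, d_comm h2]
  ring
end

section
/- Let m : Ω → S² ⊂ ℝ³ be smooth with planar part m = (m1,m2) nonvanishing, and let m_* : Ω → S¹ ⊂ ℂ be smooth. Then pointwise one has the decomposition ∇m − ∇m_* = (m/|m|) ∇√(1 − m3²) + (i m/|m|²)(j(m) − j(m_*)) + i(m/|m|² − m_*) j(m_*), where m is identified with the complex number m1 + i m2 and j(v) = (iv, ∇v). -/
open Complex

/-- Real inner product on ℂ: `(a, b) = Re(ā b)`. -/
def rinner (a b : ℂ) : ℝ := a.re * b.re + a.im * b.im

/-- Components of the supercurrent `j(v) = (iv, ∇v)`. -/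
noncomputable def j1 (v : ℝ × ℝ → ℂ) (x : ℝ × ℝ) : ℝ := rinner (Complex.I * v x) (d1 v x)
noncomputable def j2 (v : ℝ × ℝ → ℂ) (x : ℝ × ℝ) : ℝ := rinner (Complex.I * v x) (d2 v x)

lemma conj_mul_rinner (w z : ℂ) :
    (starRingEnd ℂ) w * z = (rinner w z : ℂ) + (rinner (Complex.I * w) z : ℂ) * Complex.I := by
  apply Complex.ext <;> simp [rinner, mul_re, mul_im] <;> ring

lemma main_aux (ρ dg J Js : ℝ) (w msx z zs : ℂ)
    (hρ : (0:ℝ) < ρ)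
    (hw : w * (starRingEnd ℂ) w = (ρ:ℂ)^2)
    (hms : msx * (starRingEnd ℂ) msx = 1)
    (h1 : rinner w z = ρ * dg)
    (hJ : rinner (Complex.I * w) z = J)
    (h0 : rinner msx zs = 0)
    (hJs : rinner (Complex.I * msx) zs = Js) :
    z - zs = w / (ρ:ℂ) * (dg:ℂ)
      + Complex.I * w / ((ρ:ℂ)^2) * ((J - Js : ℝ):ℂ)
      + Complex.I * (w / ((ρ:ℂ)^2) - msx) * ((Js:ℝ):ℂ) := by
  have hρc : (ρ:ℂ) ≠ 0 := by exact_mod_cast hρ.ne'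
  have e1 : (ρ:ℂ)^2 * z = w * (((ρ * dg : ℝ):ℂ) + (J:ℂ) * Complex.I) := by
    calc (ρ:ℂ)^2 * z = w * ((starRingEnd ℂ) w * z) := by rw [← hw]; ring
    _ = w * (((ρ * dg : ℝ):ℂ) + (J:ℂ) * Complex.I) := by
        rw [conj_mul_rinner, h1, hJ]
  have e2 : zs = msx * ((Js:ℂ) * Complex.I) := by
    calc zs = msx * ((starRingEnd ℂ) msx * zs) := by rw [← mul_assoc, hms, one_mul]
    _ = msx * ((Js:ℂ) * Complex.I) := by rw [conj_mul_rinner, h0, hJs]; simp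
  have hz : z = w * (((ρ * dg : ℝ):ℂ) + (J:ℂ) * Complex.I) / (ρ:ℂ)^2 := by
    rw [eq_div_iff (pow_ne_zero 2 hρc)]; linear_combination e1
  rw [hz, e2]
  push_cast
  field_simp
  ring

lemma component
    (Ω : Set (ℝ × ℝ)) (hΩ : IsOpen Ω)
    (m1 m2 m3 : ℝ × ℝ → ℝ) (ms : ℝ × ℝ → ℂ)
    (hm1 : ContDiffOn ℝ (⊤ : ℕ∞) m1 Ω) (hm2 : ContDiffOn ℝ (⊤ : ℕ∞) m2 Ω) (hm3 : ContDiffOn ℝ (⊤ : ℕ∞) m3 Ω)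
    (hms : ContDiffOn ℝ (⊤ : ℕ∞) ms Ω)
    (hsph : ∀ x ∈ Ω, m1 x ^ 2 + m2 x ^ 2 + m3 x ^ 2 = 1)
    (hnz : ∀ x ∈ Ω, 0 < m1 x ^ 2 + m2 x ^ 2)
    (hums : ∀ x ∈ Ω, ‖ms x‖ = 1)
    (x : ℝ × ℝ) (hx : x ∈ Ω) (v : ℝ × ℝ) :
    fderiv ℝ (fun y => (m1 y : ℂ) + m2 y * Complex.I) x v - fderiv ℝ ms x v
      = ((m1 x : ℂ) + m2 x * Complex.I)
            / (‖(m1 x : ℂ) + m2 x * Complex.I‖ : ℂ)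
            * ((fderiv ℝ (fun y => Real.sqrt (1 - m3 y ^ 2)) x v : ℝ) : ℂ)
        + Complex.I * ((m1 x : ℂ) + m2 x * Complex.I)
            / ((‖(m1 x : ℂ) + m2 x * Complex.I‖ : ℂ) ^ 2)
            * ((rinner (Complex.I * ((m1 x : ℂ) + m2 x * Complex.I))
                  (fderiv ℝ (fun y => (m1 y : ℂ) + m2 y * Complex.I) x v)
                - rinner (Complex.I * ms x) (fderiv ℝ ms x v) : ℝ) : ℂ)
        + Complex.I * (((m1 x : ℂ) + m2 x * Complex.I)
            / ((‖(m1 x : ℂ) + m2 x * Complex.I‖ : ℂ) ^ 2) - ms x)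
            * ((rinner (Complex.I * ms x) (fderiv ℝ ms x v) : ℝ) : ℂ) := by
  have hmem : Ω ∈ nhds x := hΩ.mem_nhds hx
  have hd1 : DifferentiableAt ℝ m1 x := (hm1.contDiffAt hmem).differentiableAt (by simp)
  have hd2 : DifferentiableAt ℝ m2 x := (hm2.contDiffAt hmem).differentiableAt (by simp)
  have hd3 : DifferentiableAt ℝ m3 x := (hm3.contDiffAt hmem).differentiableAt (by simp)
  have hds : DifferentiableAt ℝ ms x := (hms.contDiffAt hmem).differentiableAt (by simp)
  set a := fderiv ℝ m1 x v with ha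
  set b := fderiv ℝ m2 x v with hb
  set c := fderiv ℝ m3 x v with hc
  set w : ℂ := (m1 x : ℂ) + m2 x * Complex.I with hwdef
  -- derivative of the complexified planar part
  have hfd : HasFDerivAt (fun y => (m1 y : ℂ) + m2 y * Complex.I)
      ((fderiv ℝ m1 x).smulRight (1:ℂ) + (fderiv ℝ m2 x).smulRight Complex.I) x := by
    have h := (hd1.hasFDerivAt.smul_const (1:ℂ)).add (hd2.hasFDerivAt.smul_const Complex.I)
    refine h.congr_of_eventuallyEq (Filter.Eventually.of_forall fun y => ?_)
    simp [Complex.real_smul]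
  have hz : fderiv ℝ (fun y => (m1 y : ℂ) + m2 y * Complex.I) x v = (a:ℂ) + (b:ℂ)*Complex.I := by
    rw [hfd.fderiv]
    simp [Complex.real_smul]
    rfl
  -- constraint derivative : m1 a + m2 b + m3 c = 0
  have hS0 : HasFDerivAt (fun y => m1 y ^ 2 + m2 y ^ 2 + m3 y ^ 2)
      (0 : (ℝ×ℝ) →L[ℝ] ℝ) x := by
    have hev : (fun y => m1 y ^ 2 + m2 y ^ 2 + m3 y ^ 2) =ᶠ[nhds x] (fun _ => (1:ℝ)) :=
      Filter.eventually_of_mem hmem hsph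
    exact (hasFDerivAt_const (1:ℝ) x).congr_of_eventuallyEq hev
  have hS1 : HasFDerivAt (fun y => m1 y ^ 2 + m2 y ^ 2 + m3 y ^ 2)
      (((2*m1 x) • fderiv ℝ m1 x) + ((2*m2 x) • fderiv ℝ m2 x) + ((2*m3 x) • fderiv ℝ m3 x)) x := by
    have h1 := hd1.hasFDerivAt
    have h2 := hd2.hasFDerivAt
    have h3 := hd3.hasFDerivAt
    have := ((h1.mul h1).add (h2.mul h2)).add (h3.mul h3)
    have heq : (fun y => m1 y ^ 2 + m2 y ^ 2 + m3 y ^ 2)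
        = fun y => m1 y * m1 y + m2 y * m2 y + m3 y * m3 y := by funext y; ring
    rw [heq]
    exact this.congr_fderiv (ContinuousLinearMap.ext fun y => by simp; ring)
  have hcon : m1 x * a + m2 x * b + m3 x * c = 0 := by
    have := hS0.unique hS1
    have h := congrArg (fun (L : (ℝ×ℝ) →L[ℝ] ℝ) => L v) this
    simp only [ContinuousLinearMap.zero_apply, ContinuousLinearMap.add_apply,
      ContinuousLinearMap.coe_smul', Pi.smul_apply, smul_eq_mul] at h
    rw [← ha, ← hb, ← hc] at h
    linarith
  -- derivative of sqrt(1 - m3²)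
  have ht : (0:ℝ) < 1 - m3 x ^ 2 := by
    have := hsph x hx; have := hnz x hx; linarith
  have hgin : HasFDerivAt (fun y => 1 - m3 y ^ 2) ((-(2*m3 x)) • fderiv ℝ m3 x) x := by
    have h3 := hd3.hasFDerivAt
    have := (hasFDerivAt_const (1:ℝ) x).sub (h3.mul h3)
    have heq : (fun y => 1 - m3 y ^ 2) = fun y => 1 - m3 y * m3 y := by funext y; ring
    rw [heq]
    exact this.congr_fderiv (ContinuousLinearMap.ext fun y => by simp; ring)
  have hg : HasFDerivAt (fun y => Real.sqrt (1 - m3 y ^ 2))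
      ((1/(2*Real.sqrt (1 - m3 x ^ 2))) • ((-(2*m3 x)) • fderiv ℝ m3 x)) x :=
    (Real.hasDerivAt_sqrt ht.ne').comp_hasFDerivAt x hgin
  set s := Real.sqrt (1 - m3 x ^ 2) with hsdef
  have hspos : 0 < s := Real.sqrt_pos.mpr ht
  have hdg : fderiv ℝ (fun y => Real.sqrt (1 - m3 y ^ 2)) x v = (1/(2*s)) * (-(2*m3 x) * c) := by
    rw [hg.fderiv, hc]; simp only [ContinuousLinearMap.smul_apply, smul_eq_mul]
  have hsdg : s * fderiv ℝ (fun y => Real.sqrt (1 - m3 y ^ 2)) x v = -(m3 x * c) := by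
    rw [hdg]; field_simp
  -- |w| = s
  have hnsq : Complex.normSq w = 1 - m3 x ^ 2 := by
    have := hsph x hx
    simp [hwdef, Complex.normSq_apply]
    nlinarith [this]
  have habs : ‖w‖ = s := by
    rw [Complex.norm_def, hnsq, hsdef]
  -- the rinner facts
  have h1 : rinner w (fderiv ℝ (fun y => (m1 y : ℂ) + m2 y * Complex.I) x v)
      = s * fderiv ℝ (fun y => Real.sqrt (1 - m3 y ^ 2)) x v := by
    rw [hz, hsdg]
    simp [rinner, hwdef]
    linarith
  -- ms facts
  have hmsnorm : ∀ᶠ y in nhds x, (ms y).re ^ 2 + (ms y).im ^ 2 = 1 := by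
    filter_upwards [hmem] with y hy
    have := hums y hy
    have h2 : Complex.normSq (ms y) = 1 := by
      rw [← Complex.sq_norm, this]; norm_num
    simpa [Complex.normSq_apply, pow_two] using h2
  have hmsx1 : (ms x).re ^ 2 + (ms x).im ^ 2 = 1 := hmsnorm.self_of_nhds
  have h0 : rinner (ms x) (fderiv ℝ ms x v) = 0 := by
    have hp : HasFDerivAt (fun y => (ms y).re) (Complex.reCLM.comp (fderiv ℝ ms x)) x :=
      (Complex.reCLM.hasFDerivAt).comp x hds.hasFDerivAt
    have hq : HasFDerivAt (fun y => (ms y).im) (Complex.imCLM.comp (fderiv ℝ ms x)) x :=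
      (Complex.imCLM.hasFDerivAt).comp x hds.hasFDerivAt
    have hT0 : HasFDerivAt (fun y => (ms y).re ^ 2 + (ms y).im ^ 2) (0 : (ℝ×ℝ) →L[ℝ] ℝ) x :=
      (hasFDerivAt_const (1:ℝ) x).congr_of_eventuallyEq hmsnorm
    have hT1 : HasFDerivAt (fun y => (ms y).re ^ 2 + (ms y).im ^ 2)
        (((2*(ms x).re) • (Complex.reCLM.comp (fderiv ℝ ms x)))
          + ((2*(ms x).im) • (Complex.imCLM.comp (fderiv ℝ ms x)))) x := by
      have := (hp.mul hp).add (hq.mul hq)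
      have heq : (fun y => (ms y).re ^ 2 + (ms y).im ^ 2)
          = fun y => (ms y).re * (ms y).re + (ms y).im * (ms y).im := by funext y; ring
      rw [heq]
      exact this.congr_fderiv (ContinuousLinearMap.ext fun y => by simp; ring)
    have := hT0.unique hT1
    have h := congrArg (fun (L : (ℝ×ℝ) →L[ℝ] ℝ) => L v) this
    simp only [ContinuousLinearMap.zero_apply, ContinuousLinearMap.add_apply,
      ContinuousLinearMap.coe_smul', Pi.smul_apply, smul_eq_mul,
      ContinuousLinearMap.coe_comp', Function.comp_apply, Complex.reCLM_apply,
      Complex.imCLM_apply] at h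
    simp only [rinner]
    linarith
  -- remaining algebraic facts
  have hwconj : w * (starRingEnd ℂ) w = ((s:ℝ):ℂ)^2 := by
    rw [Complex.mul_conj, hnsq]
    norm_cast
    rw [Real.sq_sqrt ht.le]
  have hmsc : ms x * (starRingEnd ℂ) (ms x) = 1 := by
    rw [Complex.mul_conj]
    norm_cast
    rw [← Complex.sq_norm, hums x hx]
    norm_num
  rw [habs]
  exact main_aux s _ _ _ w (ms x) _ _ hspos hwconj hmsc h1 rfl h0 rfl

/-- pointwise Hodge-type decomposition of `∇m − ∇m_*`:
`∇m − ∇m_* = (m/|m|) ∇√(1 − m₃²) + (im/|m|²)(j(m) − j(m_*)) + i(m/|m|² − m_*) j(m_*)`,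
where `m` is the complexified planar part of the `S²`-valued map. -/
theorem gradient_decomposition
    (Ω : Set (ℝ × ℝ)) (hΩ : IsOpen Ω)
    (m1 m2 m3 : ℝ × ℝ → ℝ) (ms : ℝ × ℝ → ℂ)
    (hm1 : ContDiffOn ℝ (⊤ : ℕ∞) m1 Ω) (hm2 : ContDiffOn ℝ (⊤ : ℕ∞) m2 Ω) (hm3 : ContDiffOn ℝ (⊤ : ℕ∞) m3 Ω)
    (hms : ContDiffOn ℝ (⊤ : ℕ∞) ms Ω)
    (hsph : ∀ x ∈ Ω, m1 x ^ 2 + m2 x ^ 2 + m3 x ^ 2 = 1)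
    (hnz : ∀ x ∈ Ω, 0 < m1 x ^ 2 + m2 x ^ 2)
    (hums : ∀ x ∈ Ω, ‖ms x‖ = 1) :
    ∀ x ∈ Ω,
      (d1 (fun y => (m1 y : ℂ) + m2 y * Complex.I) x - d1 ms x
          = ((m1 x : ℂ) + m2 x * Complex.I)
                / (‖(m1 x : ℂ) + m2 x * Complex.I‖ : ℂ)
                * ((d1 (fun y => Real.sqrt (1 - m3 y ^ 2)) x : ℝ) : ℂ)
            + Complex.I * ((m1 x : ℂ) + m2 x * Complex.I)
                / ((‖(m1 x : ℂ) + m2 x * Complex.I‖ : ℂ) ^ 2)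
                * ((j1 (fun y => (m1 y : ℂ) + m2 y * Complex.I) x - j1 ms x : ℝ) : ℂ)
            + Complex.I * (((m1 x : ℂ) + m2 x * Complex.I)
                / ((‖(m1 x : ℂ) + m2 x * Complex.I‖ : ℂ) ^ 2) - ms x)
                * ((j1 ms x : ℝ) : ℂ))
        ∧ d2 (fun y => (m1 y : ℂ) + m2 y * Complex.I) x - d2 ms x
          = ((m1 x : ℂ) + m2 x * Complex.I)
                / (‖(m1 x : ℂ) + m2 x * Complex.I‖ : ℂ)
                * ((d2 (fun y => Real.sqrt (1 - m3 y ^ 2)) x : ℝ) : ℂ)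
            + Complex.I * ((m1 x : ℂ) + m2 x * Complex.I)
                / ((‖(m1 x : ℂ) + m2 x * Complex.I‖ : ℂ) ^ 2)
                * ((j2 (fun y => (m1 y : ℂ) + m2 y * Complex.I) x - j2 ms x : ℝ) : ℂ)
            + Complex.I * (((m1 x : ℂ) + m2 x * Complex.I)
                / ((‖(m1 x : ℂ) + m2 x * Complex.I‖ : ℂ) ^ 2) - ms x)
                * ((j2 ms x : ℝ) : ℂ) := by
  intro x hx
  refine ⟨?_, ?_⟩
  · exact component Ω hΩ m1 m2 m3 ms hm1 hm2 hm3 hms hsph hnz hums x hx (1, 0)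
  · exact component Ω hΩ m1 m2 m3 ms hm1 hm2 hm3 hms hsph hnz hums x hx (0, 1)
end

section
/- Let m : (0,T) × Ω → S² be a smooth solution of the rescaled LLG equation α⁻¹ ∂ₜm = m × (∂ₜm − f_ε(m)). Then the planar supercurrent satisfies div j(m) = −α⁻¹ ∂ₜm3 + (im, ∂ₜm), where m = m1 + i m2 is the complexified planar part. -/
/-- Time derivative on `ℝ × ℝ²`. -/
noncomputable def pt {E : Type*} [NormedAddCommGroup E] [NormedSpace ℝ E]
    (f : ℝ × ℝ × ℝ → E) (x : ℝ × ℝ × ℝ) : E := fderiv ℝ f x (1, 0, 0)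

/-- First spatial partial derivative. -/
noncomputable def px1 {E : Type*} [NormedAddCommGroup E] [NormedSpace ℝ E]
    (f : ℝ × ℝ × ℝ → E) (x : ℝ × ℝ × ℝ) : E := fderiv ℝ f x (0, 1, 0)

/-- Second spatial partial derivative. -/
noncomputable def px2 {E : Type*} [NormedAddCommGroup E] [NormedSpace ℝ E]
    (f : ℝ × ℝ × ℝ → E) (x : ℝ × ℝ × ℝ) : E := fderiv ℝ f x (0, 0, 1)

/-- Euclidean inner product on ℝ³. -/
def dot3 (a b : Fin 3 → ℝ) : ℝ := a 0 * b 0 + a 1 * b 1 + a 2 * b 2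

/-- Cross product on ℝ³. -/
def cross3 (a b : Fin 3 → ℝ) : Fin 3 → ℝ :=
  ![a 1 * b 2 - a 2 * b 1, a 2 * b 0 - a 0 * b 2, a 0 * b 1 - a 1 * b 0]

/-- The third standard basis vector of ℝ³. -/
def e3 : Fin 3 → ℝ := ![0, 0, 1]

/-- The negative `L²` gradient `f_ε(m) = Δm + |∇m|² m − ε⁻²(m₃ e₃ − m₃² m)`. -/
noncomputable def feps (ε : ℝ) (m : ℝ × ℝ × ℝ → Fin 3 → ℝ) (y : ℝ × ℝ × ℝ) : Fin 3 → ℝ :=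
  px1 (px1 m) y + px2 (px2 m) y
    + (dot3 (px1 m y) (px1 m y) + dot3 (px2 m y) (px2 m y)) • m y
    - (ε ^ 2)⁻¹ • ((m y 2) • e3 - (m y 2) ^ 2 • m y)

/-- The micromagnetic energy density `e_ε(m) = ½|∇m|² + (2ε²)⁻¹ m₃²`. -/
noncomputable def micromagDensity (ε : ℝ) (m : ℝ × ℝ × ℝ → Fin 3 → ℝ) (z : ℝ × ℝ × ℝ) : ℝ :=
  (dot3 (px1 m z) (px1 m z) + dot3 (px2 m z) (px2 m z)) / 2 + (m z 2) ^ 2 / (2 * ε ^ 2)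

/-- The rescaled Landau–Lifshitz–Gilbert equation `α⁻¹ ∂ₜm = m × (∂ₜm − f_ε(m))`. -/
def RescaledLLG (α ε : ℝ) (m : ℝ × ℝ × ℝ → Fin 3 → ℝ) (S : Set (ℝ × ℝ × ℝ)) : Prop :=
  ∀ y ∈ S, α⁻¹ • pt m y = cross3 (m y) (pt m y - feps ε m y)


noncomputable abbrev proj3 (i : Fin 3) : (Fin 3 → ℝ) →L[ℝ] ℝ :=
  ContinuousLinearMap.proj (R := ℝ) (φ := fun _ : Fin 3 => ℝ) i

private lemma fderiv_proj_apply {f : ℝ × ℝ × ℝ → Fin 3 → ℝ} {z : ℝ × ℝ × ℝ}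
    (hf : DifferentiableAt ℝ f z) (i : Fin 3) (e : ℝ × ℝ × ℝ) :
    fderiv ℝ (fun x => f x i) z e = fderiv ℝ f z e i := by
  have h : HasFDerivAt (fun x => f x i) ((proj3 i).comp (fderiv ℝ f z)) z :=
    ((proj3 i).hasFDerivAt.comp z hf.hasFDerivAt :)
  rw [h.fderiv]
  rfl

private lemma diffAt_proj {f : ℝ × ℝ × ℝ → Fin 3 → ℝ} {z : ℝ × ℝ × ℝ}
    (hf : DifferentiableAt ℝ f z) (i : Fin 3) :
    DifferentiableAt ℝ (fun x => f x i) z :=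
  (((proj3 i).differentiableAt).comp z hf :)

private lemma contDiffAt_proj {f : ℝ × ℝ × ℝ → Fin 3 → ℝ} {z : ℝ × ℝ × ℝ}
    (hf : ContDiffAt ℝ (⊤ : ℕ∞) f z) (i : Fin 3) :
    ContDiffAt ℝ (⊤ : ℕ∞) (fun x => f x i) z :=
  (((proj3 i).contDiff.contDiffAt).comp z hf :)

private lemma contDiffAt_fderiv_apply {E F : Type*} [NormedAddCommGroup E] [NormedSpace ℝ E]
    [NormedAddCommGroup F] [NormedSpace ℝ F] {f : E → F} {x : E}
    (hf : ContDiffAt ℝ (⊤ : ℕ∞) f x) (e : E) :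
    ContDiffAt ℝ (⊤ : ℕ∞) (fun z => fderiv ℝ f z e) x :=
  (((ContinuousLinearMap.apply ℝ F e).contDiff.contDiffAt).comp x (hf.fderiv_right (m := ((⊤ : ℕ∞) : WithTop ℕ∞)) (by exact_mod_cast le_top)) :)

private lemma fderiv_complexify {m : ℝ × ℝ × ℝ → Fin 3 → ℝ} {z : ℝ × ℝ × ℝ}
    (hm : DifferentiableAt ℝ m z) (e : ℝ × ℝ × ℝ) :
    fderiv ℝ (fun x => (m x 0 : ℂ) + m x 1 * Complex.I) z e
      = (fderiv ℝ (fun x => m x 0) z e : ℂ)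
        + (fderiv ℝ (fun x => m x 1) z e : ℂ) * Complex.I := by
  have h0 := diffAt_proj hm 0
  have h1 := diffAt_proj hm 1
  have H : HasFDerivAt (fun x => (m x 0 : ℂ) + m x 1 * Complex.I)
      ((Complex.ofRealCLM.comp (fderiv ℝ (fun x => m x 0) z))
        + (Complex.I • Complex.ofRealCLM.comp (fderiv ℝ (fun x => m x 1) z))) z :=
    ((Complex.ofRealCLM.hasFDerivAt.comp z h0.hasFDerivAt).add
      ((Complex.ofRealCLM.hasFDerivAt.comp z h1.hasFDerivAt).mul_const Complex.I) :)
  rw [H.fderiv]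
  simp [Complex.real_smul]
  ring

private lemma rinner_eval (a b c d : ℝ) :
    rinner (Complex.I * ((a : ℂ) + b * Complex.I)) ((c : ℂ) + d * Complex.I)
      = a * d - b * c := by
  simp [rinner]
  ring

private lemma second_deriv_proj {m : ℝ × ℝ × ℝ → Fin 3 → ℝ} {S : Set (ℝ × ℝ × ℝ)}
    (hS : IsOpen S) (hm : ContDiffOn ℝ (⊤ : ℕ∞) m S) {y : ℝ × ℝ × ℝ} (hy : y ∈ S)
    (e : ℝ × ℝ × ℝ) (i : Fin 3) :
    fderiv ℝ (fun z => fderiv ℝ m z e) y e i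
      = fderiv ℝ (fun z => fderiv ℝ (fun x => m x i) z e) y e := by
  have hC : ∀ z ∈ S, ContDiffAt ℝ (⊤ : ℕ∞) m z := fun z hz => hm.contDiffAt (hS.mem_nhds hz)
  have hD : DifferentiableAt ℝ (fun z => fderiv ℝ m z e) y :=
    (contDiffAt_fderiv_apply (hC y hy) e).differentiableAt (by simp)
  rw [← fderiv_proj_apply hD i e]
  have hev : (fun z => fderiv ℝ m z e i) =ᶠ[nhds y]
      (fun z => fderiv ℝ (fun x => m x i) z e) := by
    filter_upwards [hS.mem_nhds hy] with z hz
    exact (fderiv_proj_apply ((hC z hz).differentiableAt (by simp)) i e).symm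
  rw [hev.fderiv_eq]

private lemma supercurrent_term {m : ℝ × ℝ × ℝ → Fin 3 → ℝ} {S : Set (ℝ × ℝ × ℝ)}
    (hS : IsOpen S) (hm : ContDiffOn ℝ (⊤ : ℕ∞) m S) {y : ℝ × ℝ × ℝ} (hy : y ∈ S) (e : ℝ × ℝ × ℝ) :
    fderiv ℝ (fun z => rinner (Complex.I * ((m z 0 : ℂ) + m z 1 * Complex.I))
        (fderiv ℝ (fun w => (m w 0 : ℂ) + m w 1 * Complex.I) z e)) y e
      = m y 0 * fderiv ℝ (fun z => fderiv ℝ (fun x => m x 1) z e) y e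
        - m y 1 * fderiv ℝ (fun z => fderiv ℝ (fun x => m x 0) z e) y e := by
  have hC : ∀ z ∈ S, ContDiffAt ℝ (⊤ : ℕ∞) m z := fun z hz => hm.contDiffAt (hS.mem_nhds hz)
  have hD : ∀ z ∈ S, DifferentiableAt ℝ m z := fun z hz => (hC z hz).differentiableAt (by simp)
  have hev : (fun z => rinner (Complex.I * ((m z 0 : ℂ) + m z 1 * Complex.I))
      (fderiv ℝ (fun w => (m w 0 : ℂ) + m w 1 * Complex.I) z e))
      =ᶠ[nhds y] (fun z => m z 0 * fderiv ℝ (fun x => m x 1) z e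
        - m z 1 * fderiv ℝ (fun x => m x 0) z e) := by
    filter_upwards [hS.mem_nhds hy] with z hz
    rw [fderiv_complexify (hD z hz) e, rinner_eval]
  rw [hev.fderiv_eq]
  have hu : DifferentiableAt ℝ (fun x => m x 0) y := diffAt_proj (hD y hy) 0
  have hv : DifferentiableAt ℝ (fun x => m x 1) y := diffAt_proj (hD y hy) 1
  have hp : DifferentiableAt ℝ (fun z => fderiv ℝ (fun x => m x 0) z e) y :=
    (contDiffAt_fderiv_apply (contDiffAt_proj (hC y hy) 0) e).differentiableAt (by simp)
  have hq : DifferentiableAt ℝ (fun z => fderiv ℝ (fun x => m x 1) z e) y :=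
    (contDiffAt_fderiv_apply (contDiffAt_proj (hC y hy) 1) e).differentiableAt (by simp)
  rw [fderiv_fun_sub (hu.fun_mul hq) (hv.fun_mul hp), ContinuousLinearMap.sub_apply,
    fderiv_fun_mul hu hq, fderiv_fun_mul hv hp]
  simp only [ContinuousLinearMap.add_apply, ContinuousLinearMap.coe_smul',
    Pi.smul_apply, smul_eq_mul]
  ring

/-- for smooth solutions of the rescaled LLG equation, the planar
supercurrent satisfies `div j(m) = −α⁻¹ ∂ₜm₃ + (im, ∂ₜm)`, with `m = m₁ + i m₂`. -/
theorem rescaledLLG_div_supercurrent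
    (Ω : Set (ℝ × ℝ)) (hΩ : IsOpen Ω) (T : ℝ) (hT : 0 < T) (α ε : ℝ)
    (hα : 0 < α) (hε : 0 < ε) (m : ℝ × ℝ × ℝ → Fin 3 → ℝ)
    (hm : ContDiffOn ℝ (⊤ : ℕ∞) m (Set.Ioo 0 T ×ˢ Ω))
    (hsph : ∀ y ∈ Set.Ioo 0 T ×ˢ Ω, dot3 (m y) (m y) = 1)
    (heq : RescaledLLG α ε m (Set.Ioo 0 T ×ˢ Ω)) :
    ∀ y ∈ Set.Ioo 0 T ×ˢ Ω,
      px1 (fun z => rinner (Complex.I * ((m z 0 : ℂ) + m z 1 * Complex.I))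
            (px1 (fun w => (m w 0 : ℂ) + m w 1 * Complex.I) z)) y
          + px2 (fun z => rinner (Complex.I * ((m z 0 : ℂ) + m z 1 * Complex.I))
            (px2 (fun w => (m w 0 : ℂ) + m w 1 * Complex.I) z)) y
        = -α⁻¹ * pt (fun z => m z 2) y
          + rinner (Complex.I * ((m y 0 : ℂ) + m y 1 * Complex.I))
              (pt (fun w => (m w 0 : ℂ) + m w 1 * Complex.I) y) := by
  intro y hy
  have hS : IsOpen (Set.Ioo (0:ℝ) T ×ˢ Ω) := isOpen_Ioo.prod hΩ
  have hC : ContDiffAt ℝ (⊤ : ℕ∞) m y := hm.contDiffAt (hS.mem_nhds hy)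
  have hD : DifferentiableAt ℝ m y := hC.differentiableAt (by simp)
  have h2 := congrFun (heq y hy) 2
  simp only [Pi.smul_apply, smul_eq_mul, cross3, Matrix.cons_val_zero, Matrix.cons_val_one,
    Matrix.head_cons, Matrix.cons_val_two, Matrix.tail_cons, Pi.sub_apply, feps,
    Pi.add_apply, dot3, e3, pt, px1, px2, mul_zero, zero_sub] at h2
  rw [show px1 m = fun z => fderiv ℝ m z (0, 1, 0) from rfl,
    show px2 m = fun z => fderiv ℝ m z (0, 0, 1) from rfl,
    second_deriv_proj hS hm hy (0, 1, 0) 0, second_deriv_proj hS hm hy (0, 1, 0) 1,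
    second_deriv_proj hS hm hy (0, 0, 1) 0, second_deriv_proj hS hm hy (0, 0, 1) 1,
    ← fderiv_proj_apply hD 0 (1, 0, 0), ← fderiv_proj_apply hD 1 (1, 0, 0),
    ← fderiv_proj_apply hD 2 (1, 0, 0)] at h2
  simp only [px1, px2, pt]
  rw [supercurrent_term hS hm hy (0, 1, 0), supercurrent_term hS hm hy (0, 0, 1),
    fderiv_complexify hD (1, 0, 0), rinner_eval]
  linear_combination h2
end

section
/- Suppose σ₁,…,σ_Q : I → ℝ take values in 4πℤ \ {0} and b₁,…,b_Q : I → Ω are functions on an interval I ⊂ ℝ with b_p(t) ≠ b_q(t) for p ≠ q and all t, such that the measure-valued map t ↦ λ(t) = Σ_p σ_p(t) δ_{b_p(t)} is continuous in the weak* topology on (C⁰₀(Ω))*. Then, after relabeling, each b_p is continuous on I and each σ_p is constant on I. -/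
/-!
Pairing `λ(s)` with a bump around an atom `b p t` of `λ(t)` gives, by weak* continuity, a value
within `4π` of `σ p t`, which is itself at least `4π` in absolute value. Hence for `s` near `t` each
small ball around `b p t` contains an atom of `λ(s)`, exactly one since there are `Q` atoms, and
its weight is `σ p t` because distinct points of `4πℤ` are `4π` apart. Thus the unlabeled
configuration moves continuously and, near each time, the matching of atoms is unique. This
gives continuous labelings locally; two of them differ by a constant permutation on any interval,
so they glue along `I` by connectedness, and the weights are locally, hence globally, constant.
-/

open Set Filter Topology Metric Function Equiv

theorem le_abs_of_eq_mul_intCast {c w : ℝ} (hc : 0 ≤ c) (hw : ∃ k : ℤ, k ≠ 0 ∧ w = c * k) :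
    c ≤ |w| := by
  obtain ⟨k, hk, rfl⟩ := hw
  rw [abs_mul, abs_of_nonneg hc, ← Int.cast_abs]
  exact le_mul_of_one_le_right hc (by exact_mod_cast Int.one_le_abs hk)

theorem eq_of_abs_sub_lt_of_eq_mul_intCast {c x y : ℝ} (hc : 0 ≤ c) (hx : ∃ k : ℤ, x = c * k)
    (hy : ∃ m : ℤ, y = c * m) (h : |x - y| < c) : x = y := by
  obtain ⟨k, rfl⟩ := hx
  obtain ⟨m, rfl⟩ := hy
  by_contra hne
  have hkm : k - m ≠ 0 := sub_ne_zero.2 fun h' => hne (by rw [h'])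
  have := le_abs_of_eq_mul_intCast (w := c * k - c * m) hc ⟨k - m, hkm, by push_cast; ring⟩
  linarith

section Matching

variable {ι X : Type*} [MetricSpace X] {x y : ι → X} {ρ : ℝ}

theorem eventually_forall_ne_lt_dist [Finite ι] (hy : Injective y) :
    ∀ᶠ r in 𝓝 (0 : ℝ), ∀ p q, p ≠ q → r < dist (y p) (y q) := by
  simp only [eventually_all]
  exact fun p q hpq => eventually_lt_nhds (dist_pos.2 (hy.ne hpq))

theorem exists_pos_forall_ne_lt_dist [Finite ι] (hy : Injective y) :
    ∃ r > 0, ∀ p q, p ≠ q → r < dist (y p) (y q) :=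
  (((eventually_forall_ne_lt_dist hy).filter_mono nhdsWithin_le_nhds).and
    (self_mem_nhdsWithin (s := Ioi 0))).exists.imp fun _ h => ⟨h.2, h.1⟩

variable (hsep : ∀ p q, p ≠ q → 2 * ρ ≤ dist (y p) (y q))
include hsep

theorem apply_eq_of_dist_lt {a : Perm ι} (ha : ∀ p, dist (x (a p)) (y p) < ρ) {p q : ι}
    (hq : dist (x q) (y p) < ρ) : q = a p := by
  obtain ⟨p', rfl⟩ := a.surjective q
  by_contra hne
  have := hsep p p' fun h => hne (by rw [h])
  linarith [dist_triangle_left (y p) (y p') (x (a p')), ha p']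

theorem exists_perm_forall_dist_lt [Finite ι] (hnear : ∀ p, ∃ q, dist (x q) (y p) < ρ) :
    ∃ a : Perm ι, ∀ p, dist (x (a p)) (y p) < ρ := by
  choose a ha using hnear
  have hinj : Injective a := fun p p' h => by
    by_contra hne
    have := hsep p p' hne
    linarith [dist_triangle_left (y p) (y p') (x (a p')), ha p, ha p', h ▸ ha p]
  exact ⟨Equiv.ofBijective a (Finite.injective_iff_bijective.1 hinj), ha⟩

end Matching

theorem IsPreconnected.apply_eq_of_eventually_eq {α β : Type*} [TopologicalSpace α] {S : Set α}
    (hS : IsPreconnected S) {g : α → β} (hg : ∀ x ∈ S, ∀ᶠ y in 𝓝[S] x, g y = g x) {x y : α}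
    (hx : x ∈ S) (hy : y ∈ S) : g x = g y :=
  hS.induction₂ (fun x y => g x = g y) (fun x hx => (hg x hx).mono fun _ h => h.symm)
    (fun _ _ _ _ _ _ => Eq.trans) (fun _ _ _ _ => Eq.symm) hx hy

theorem ContinuousOn.inter_union_of_isOpen {α β : Type*} [TopologicalSpace α]
    [TopologicalSpace β] {f : α → β} {S U V : Set α} (hU : ContinuousOn f (S ∩ U))
    (hV : ContinuousOn f (S ∩ V)) (hUo : IsOpen U) (hVo : IsOpen V) :
    ContinuousOn f (S ∩ (U ∪ V)) := by
  rintro x ⟨hxS, hxU | hxV⟩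
  · exact (hU x ⟨hxS, hxU⟩).mono_of_mem_nhdsWithin <|
      mem_of_superset (inter_mem_nhdsWithin _ (hUo.mem_nhds hxU)) fun z hz => ⟨hz.1.1, hz.2⟩
  · exact (hV x ⟨hxS, hxV⟩).mono_of_mem_nhdsWithin <|
      mem_of_superset (inter_mem_nhdsWithin _ (hVo.mem_nhds hxV)) fun z hz => ⟨hz.1.1, hz.2⟩

section Relabeling

variable {α ι X : Type*} [TopologicalSpace α] [MetricSpace X]

def ContinuousRelabeling (b : ι → α → X) (J : Set α) (f : α → Perm ι) : Prop :=
  ∀ p, ContinuousOn (fun t => b (f t p) t) J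

/-- The unlabeled configuration `{b p t}` depends continuously on `t ∈ J`. -/
def ContinuousOnUpToPerm (b : ι → α → X) (J : Set α) : Prop :=
  ∀ t ∈ J, ∀ ε > 0, ∀ᶠ s in 𝓝[J] t, ∃ a : Perm ι, ∀ p, dist (b (a p) s) (b p t) < ε

variable {b : ι → α → X} {J : Set α} {f g : α → Perm ι} {t : α}

namespace ContinuousRelabeling

theorem mono (hf : ContinuousRelabeling b J f) {K : Set α} (hKJ : K ⊆ J) :
    ContinuousRelabeling b K f :=
  fun p => (hf p).mono hKJ

theorem congr (hf : ContinuousRelabeling b J f) (hgf : EqOn g f J) : ContinuousRelabeling b J g :=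
  fun p => (hf p).congr fun t ht => by rw [hgf ht]

theorem mul_const (hf : ContinuousRelabeling b J f) (c : Perm ι) :
    ContinuousRelabeling b J fun t => f t * c :=
  fun p => hf (c p)

theorem eventually_dist_lt [Finite ι] (hf : ContinuousRelabeling b J f) (ht : t ∈ J) {ε : ℝ}
    (hε : 0 < ε) :
    ∀ᶠ s in 𝓝[J] t, ∀ q, dist (b ((f s * (f t)⁻¹) q) s) (b q t) < ε := by
  filter_upwards [eventually_all.2 fun p => Metric.tendsto_nhds.1 (hf p t ht) ε hε] with s hs q
  simpa using hs ((f t)⁻¹ q)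

theorem exists_eventually_eq_mul [Finite ι] (hf : ContinuousRelabeling b J f) (ht : t ∈ J)
    (hinj : Injective (b · t)) :
    ∃ ε > 0, ∀ᶠ s in 𝓝[J] t, ∀ a : Perm ι, (∀ q, dist (b (a q) s) (b q t) < ε) →
      f s = a * f t := by
  obtain ⟨r, hr, hsep⟩ := exists_pos_forall_ne_lt_dist hinj
  refine ⟨r / 2, half_pos hr, ?_⟩
  filter_upwards [eventually_all.2 fun p => Metric.tendsto_nhds.1 (hf p t ht) _ (half_pos hr)]
    with s hs a ha
  ext p
  exact apply_eq_of_dist_lt (x := (b · s)) (fun p q hpq => by linarith [hsep p q hpq]) ha (hs p)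

theorem inv_mul_eq [Finite ι] (hf : ContinuousRelabeling b J f) (hg : ContinuousRelabeling b J g)
    (hJ : IsPreconnected J) (hinj : ∀ t ∈ J, Injective (b · t)) {x y : α} (hx : x ∈ J)
    (hy : y ∈ J) : (f x)⁻¹ * g x = (f y)⁻¹ * g y := by
  refine hJ.apply_eq_of_eventually_eq (g := fun s => (f s)⁻¹ * g s) (fun t ht => ?_) hx hy
  obtain ⟨ε, hε, hgf⟩ := hg.exists_eventually_eq_mul ht (hinj t ht)
  filter_upwards [hgf, hf.eventually_dist_lt ht hε] with s hgs hfs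
  rw [hgs _ hfs]
  group

theorem exists_union_of_isOpen [Finite ι] {U V : Set α} (hf : ContinuousRelabeling b (J ∩ U) f)
    (hg : ContinuousRelabeling b (J ∩ V) g) (hUo : IsOpen U) (hVo : IsOpen V)
    (hUV : IsPreconnected (J ∩ (U ∩ V))) (hinj : ∀ t ∈ J, Injective (b · t)) {y : α}
    (hy : y ∈ J ∩ (U ∩ V)) : ∃ h, ContinuousRelabeling b (J ∩ (U ∪ V)) h := by
  classical
  have hagree : ∀ t ∈ J ∩ (U ∩ V), g t * ((g y)⁻¹ * f y) = f t := fun t ht => by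
    have := (hg.mono fun s hs => ⟨hs.1, hs.2.2⟩).inv_mul_eq
      (hf.mono fun s hs => ⟨hs.1, hs.2.1⟩) hUV (fun s hs => hinj s hs.1) ht hy
    rw [← this]
    group
  refine ⟨fun t => if t ∈ U then f t else g t * ((g y)⁻¹ * f y), fun p =>
    ContinuousOn.inter_union_of_isOpen ((hf.congr ?_) p)
      (((hg.mul_const ((g y)⁻¹ * f y)).congr ?_) p) hUo hVo⟩
  · intro t ht
    simp [ht.2]
  · intro t ht
    by_cases htU : t ∈ U
    · simp [htU, hagree t ⟨ht.1, htU, ht.2⟩]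
    · simp [htU]

theorem apply_eq_of_eventually_exists_perm [Finite ι] {β : Type*} (hf : ContinuousRelabeling b J f)
    (hJ : IsPreconnected J) (hinj : ∀ t ∈ J, Injective (b · t)) {w : ι → α → β}
    (hw : ∀ t ∈ J, ∀ ε > 0, ∀ᶠ s in 𝓝[J] t, ∃ a : Perm ι,
      ∀ p, dist (b (a p) s) (b p t) < ε ∧ w (a p) s = w p t)
    (p : ι) {s t : α} (hs : s ∈ J) (ht : t ∈ J) : w (f s p) s = w (f t p) t := by
  refine hJ.apply_eq_of_eventually_eq (g := fun t => w (f t p) t) (fun t ht => ?_) hs ht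
  obtain ⟨ε, hε, hft⟩ := hf.exists_eventually_eq_mul ht (hinj t ht)
  filter_upwards [hft, hw t ht ε hε] with s hs ⟨a, ha⟩
  rw [hs a fun q => (ha q).1]
  exact (ha _).2

end ContinuousRelabeling

namespace ContinuousOnUpToPerm

theorem exists_mem_nhds_continuousRelabeling [Finite ι] (hb : ContinuousOnUpToPerm b J)
    (hinj : Injective (b · t)) (ht : t ∈ J) :
    ∃ U ∈ 𝓝 t, ∃ f, ContinuousRelabeling b (J ∩ U) f := by
  obtain ⟨r, hr, hsep⟩ := exists_pos_forall_ne_lt_dist hinj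
  obtain ⟨U, hU, hUa⟩ :=
    mem_nhdsWithin_iff_exists_mem_nhds_inter.1 (hb t ht (r / 4) (by positivity))
  have : ∀ s ∈ U ∩ J, ∃ a : Perm ι, ∀ p, dist (b (a p) s) (b p t) < r / 4 := fun s hs => hUa hs
  choose! a ha using this
  refine ⟨U, hU, a, fun p s₀ hs₀ => Metric.tendsto_nhds.2 fun η hη => ?_⟩
  filter_upwards [nhdsWithin_mono _ inter_subset_left
    (hb s₀ hs₀.1 (min η (r / 4)) (by positivity)), self_mem_nhdsWithin] with s ⟨c, hc⟩ hs
  -- `c ∘ a s₀` is a second matching from time `s` to time `t`, so it must be `a s`.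
  have hca : c (a s₀ p) = a s p := by
    refine apply_eq_of_dist_lt (x := (b · s)) (ρ := r / 2)
      (fun p q hpq => by linarith [hsep p q hpq])
      (fun q => (ha s ⟨hs.2, hs.1⟩ q).trans (by linarith)) ?_
    linarith [dist_triangle (b (c (a s₀ p)) s) (b (a s₀ p) s₀) (b p t), hc (a s₀ p),
      min_le_right η (r / 4), ha s₀ ⟨hs₀.2, hs₀.1⟩ p]
  rw [← hca]
  exact (hc _).trans_le (min_le_left _ _)

end ContinuousOnUpToPerm

end Relabeling

section Continuation

variable {ι X : Type*} [Finite ι] [MetricSpace X] {b : ι → ℝ → X} {J : Set ℝ}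

theorem ContinuousOnUpToPerm.exists_continuousRelabeling (hb : ContinuousOnUpToPerm b J)
    (hJ : J.OrdConnected) (hinj : ∀ t ∈ J, Injective (b · t)) :
    ∃ π : ℝ → Perm ι, ContinuousRelabeling b J π := by
  let P : ℝ → ℝ → Prop := fun x y => ∃ U, IsOpen U ∧ U.OrdConnected ∧ x ∈ U ∧ y ∈ U ∧
    ∃ f, ContinuousRelabeling b (J ∩ U) f
  have hP : ∀ x ∈ J, ∀ y ∈ J, P x y := by
    intro x hx y hy
    refine hJ.isPreconnected.induction₂ P (fun x hx => ?_) (fun x y z _ hy _ => ?_)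
      (fun x y _ _ ⟨U, hUo, hUc, hxU, hyU, hf⟩ => ⟨U, hUo, hUc, hyU, hxU, hf⟩) hx hy
    · obtain ⟨U, hU, f, hf⟩ := hb.exists_mem_nhds_continuousRelabeling (hinj x hx) hx
      obtain ⟨δ, hδ, hδU⟩ := Metric.mem_nhds_iff.1 hU
      filter_upwards [mem_nhdsWithin_of_mem_nhds (ball_mem_nhds x hδ)] with y hy
      exact ⟨ball x δ, isOpen_ball, (convex_ball x δ).ordConnected, mem_ball_self hδ, hy,
        f, hf.mono (inter_subset_inter_right J hδU)⟩
    · rintro ⟨U, hUo, hUc, hxU, hyU, f, hf⟩ ⟨V, hVo, hVc, hyV, hzV, g, hg⟩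
      refine ⟨U ∪ V, hUo.union hVo,
        (hUc.isPreconnected.union y hyU hyV hVc.isPreconnected).ordConnected, .inl hxU, .inr hzV,
        hf.exists_union_of_isOpen hg hUo hVo (hJ.inter (hUc.inter hVc)).isPreconnected hinj
          ⟨hy, hyU, hyV⟩⟩
  rcases J.eq_empty_or_nonempty with rfl | ⟨t₀, ht₀⟩
  · exact ⟨1, fun p => continuousOn_empty _⟩
  choose! U hUo hUc hU₀ hU f hf using hP t₀ ht₀
  let g : ℝ → ℝ → Perm ι := fun t s => f t s * (f t t₀)⁻¹
  have hg : ∀ t ∈ J, ContinuousRelabeling b (J ∩ U t) (g t) := fun t ht => (hf t ht).mul_const _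
  have hg₀ : ∀ t, g t t₀ = 1 := fun t => mul_inv_cancel _
  have hgg : ∀ t ∈ J, EqOn (fun s => g s s) (g t) (J ∩ U t) := fun t ht s hs => by
    have hK := (hJ.inter ((hUc s hs.1).inter (hUc t ht))).isPreconnected
    have := ((hg s hs.1).mono fun r hr => ⟨hr.1, hr.2.1⟩).inv_mul_eq
      ((hg t ht).mono fun r hr => ⟨hr.1, hr.2.2⟩) hK (fun r hr => hinj r hr.1)
      ⟨hs.1, hU s hs.1, hs.2⟩ ⟨ht₀, hU₀ s hs.1, hU₀ t ht⟩
    rwa [hg₀, hg₀, inv_one, one_mul, inv_mul_eq_one] at this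
  refine ⟨fun t => g t t, fun p t ht => ?_⟩
  refine (((hg t ht).congr (hgg t ht)) p t ⟨ht, hU t ht⟩).mono_of_mem_nhdsWithin ?_
  exact inter_mem_nhdsWithin J ((hUo t ht).mem_nhds (hU t ht))

end Continuation

section TestFunctions

variable {ι : Type*} [Fintype ι]

/-- `ψ p` detects an atom near `y p`; since `φ p` does not vanish on it, it lies where `ψ p = 1`,
so the `ψ p`-pairing is its weight, which is then pinned to `w p` by quantization. -/
theorem exists_perm_of_abs_sum_sub_lt {X : Type*} [MetricSpace X] {x y : ι → X} {w' w : ι → ℝ}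
    {c ρ : ℝ} (hc : 0 ≤ c) (hsep : ∀ p q, p ≠ q → 2 * ρ ≤ dist (y p) (y q))
    (hw' : ∀ q, ∃ k : ℤ, w' q = c * k) (hw : ∀ p, ∃ k : ℤ, k ≠ 0 ∧ w p = c * k)
    {φ ψ : ι → X → ℝ} (hψ : ∀ p z, ψ p z ≠ 0 → dist z (y p) < ρ)
    (hφψ : ∀ p z, φ p z ≠ 0 → ψ p z = 1)
    (hφ : ∀ p, |∑ q, w' q * φ p (x q) - w p| < c) (hψc : ∀ p, |∑ q, w' q * ψ p (x q) - w p| < c) :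
    ∃ a : Perm ι, ∀ p, φ p (x (a p)) ≠ 0 ∧ w' (a p) = w p := by
  have hne : ∀ p F, |F - w p| < c → F ≠ 0 := fun p F hF h0 => by
    rw [h0, zero_sub, abs_neg] at hF
    linarith [le_abs_of_eq_mul_intCast hc (hw p)]
  have hnear : ∀ p, ∃ q, dist (x q) (y p) < ρ := fun p => by
    obtain ⟨q, -, hq⟩ := Finset.exists_ne_zero_of_sum_ne_zero (hne p _ (hψc p))
    exact ⟨q, hψ p _ (right_ne_zero_of_mul hq)⟩
  obtain ⟨a, ha⟩ := exists_perm_forall_dist_lt hsep hnear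
  have hsingle : ∀ θ : ι → X → ℝ, (∀ p z, θ p z ≠ 0 → dist z (y p) < ρ) →
      ∀ p, ∑ q, w' q * θ p (x q) = w' (a p) * θ p (x (a p)) := fun θ hθ p =>
    Finset.sum_eq_single_of_mem _ (Finset.mem_univ _) fun q _ hq => by
      by_contra h
      exact hq (apply_eq_of_dist_lt hsep ha (hθ p _ (right_ne_zero_of_mul h)))
  have hφρ : ∀ p z, φ p z ≠ 0 → dist z (y p) < ρ := fun p z h =>
    hψ p z (by rw [hφψ p z h]; exact one_ne_zero)
  refine ⟨a, fun p => ?_⟩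
  have hφa : φ p (x (a p)) ≠ 0 := right_ne_zero_of_mul (hsingle φ hφρ p ▸ hne p _ (hφ p))
  refine ⟨hφa, eq_of_abs_sub_lt_of_eq_mul_intCast hc (hw' _) ((hw p).imp fun _ => And.right) ?_⟩
  simpa [hsingle ψ hψ p, hφψ p _ hφa] using hψc p

variable {E : Type*} [NormedAddCommGroup E] [NormedSpace ℝ E] [FiniteDimensional ℝ E]

theorem sum_mul_contDiffBump_eq {y : ι → E} (w : ι → ℝ) {p : ι} (θ : ContDiffBump (y p))
    (hθ : ∀ q ≠ p, θ.rOut ≤ dist (y q) (y p)) : ∑ q, w q * θ (y q) = w p := by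
  rw [Finset.sum_eq_single_of_mem p (Finset.mem_univ _) fun q _ hq => ?_,
    θ.one_of_mem_closedBall (mem_closedBall_self θ.rIn_pos.le), mul_one]
  rw [θ.zero_of_le_dist (hθ q hq), mul_zero]

theorem eventually_exists_perm_dist_lt_and_eq {Ω : Set E} (hΩ : IsOpen Ω) {I : Set ℝ}
    {σ : ι → ℝ → ℝ} {b : ι → ℝ → E} {c : ℝ} (hc : 0 < c)
    (hσ : ∀ p, ∀ t ∈ I, ∃ k : ℤ, k ≠ 0 ∧ σ p t = c * k)
    (hcont : ∀ φ : E → ℝ, Continuous φ → HasCompactSupport φ → tsupport φ ⊆ Ω →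
      ContinuousOn (fun t => ∑ p, σ p t * φ (b p t)) I)
    {t : ℝ} (ht : t ∈ I) (hbΩ : ∀ p, b p t ∈ Ω) (hinj : Injective (b · t)) {ε : ℝ} (hε : 0 < ε) :
    ∀ᶠ s in 𝓝[I] t, ∃ a : Perm ι, ∀ p, dist (b (a p) s) (b p t) < ε ∧ σ (a p) s = σ p t := by
  have hscale : ∀ k : ℝ, Tendsto (k * ·) (𝓝 0) (𝓝 0) := fun k => by
    simpa using (tendsto_id (x := 𝓝 (0 : ℝ))).const_mul k
  obtain ⟨r, ⟨hsep, hΩr, hrε⟩, hr⟩ : ∃ r, ((∀ p q, p ≠ q → 6 * r < dist (b p t) (b q t)) ∧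
      (∀ p, closedBall (b p t) (3 * r) ⊆ Ω) ∧ 2 * r < ε) ∧ 0 < r := by
    refine ((Eventually.filter_mono nhdsWithin_le_nhds ?_).and
      (self_mem_nhdsWithin (s := Ioi 0) (a := (0 : ℝ)))).exists
    exact ((hscale 6).eventually (eventually_forall_ne_lt_dist hinj)).and
      ((eventually_all.2 fun p =>
        (hscale 3).eventually (eventually_closedBall_subset (hΩ.mem_nhds (hbΩ p)))).and
        ((hscale 2).eventually (eventually_lt_nhds hε)))
  have hbump : ∀ θ : (p : ι) → ContDiffBump (b p t), (∀ p, (θ p).rOut ≤ 3 * r) →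
      ∀ᶠ s in 𝓝[I] t, ∀ p, |∑ q, σ q s * θ p (b q s) - σ p t| < c := fun θ hθ =>
    eventually_all.2 fun p => by
      have hθc := hcont (θ p) (θ p).continuous (θ p).hasCompactSupport
        ((θ p).tsupport_eq.trans_subset ((closedBall_subset_closedBall (hθ p)).trans (hΩr p)))
      have hθt := sum_mul_contDiffBump_eq (y := (b · t)) (σ · t) (θ p) fun q hq => by
        linarith [hθ p, hsep q p hq]
      simpa [hθt, Real.dist_eq] using Metric.tendsto_nhds.1 (hθc t ht) c hc
  have hlt : ∀ {z p} (θ : ContDiffBump (b p t)), θ z ≠ 0 → dist z (b p t) < θ.rOut :=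
    fun θ h => not_le.1 fun h' => h (θ.zero_of_le_dist h')
  let φ : (p : ι) → ContDiffBump (b p t) := fun p => ⟨r, 2 * r, hr, by linarith⟩
  let ψ : (p : ι) → ContDiffBump (b p t) := fun p => ⟨2 * r, 3 * r, by positivity, by linarith⟩
  filter_upwards [hbump φ fun p => by simp only [φ]; linarith, hbump ψ fun p => le_rfl,
    self_mem_nhdsWithin] with s hφs hψs hs
  obtain ⟨a, ha⟩ := exists_perm_of_abs_sum_sub_lt (x := (b · s)) (ρ := 3 * r)
    (φ := fun p => φ p) (ψ := fun p => ψ p) hc.le (fun p q hpq => by linarith [hsep p q hpq])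
    (fun q => (hσ q s hs).imp fun _ => And.right) (fun p => hσ p t ht)
    (fun p z h => hlt (ψ p) h)
    (fun p z h => (ψ p).one_of_mem_closedBall (mem_closedBall.2 (hlt (φ p) h).le)) hφs hψs
  exact ⟨a, fun p => ⟨(hlt (φ p) (ha p).1).trans hrε, (ha p).2⟩⟩

end TestFunctions

/-- if `λ(t) = Σ_p σ_p(t) δ_{b_p(t)}` is a weak*-continuous curve of
atomic measures on `Ω` with distinct atoms and masses in `4πℤ \ {0}`, then after
relabeling the trajectories `b_p` are continuous and the weights `σ_p` are constant. -/
theorem atomic_measures_continuous_trajectories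
    (Ω : Set (ℝ × ℝ)) (hΩ : IsOpen Ω) (I : Set ℝ) (hI : I.OrdConnected)
    (Q : ℕ) (σ : Fin Q → ℝ → ℝ) (b : Fin Q → ℝ → ℝ × ℝ)
    (hbΩ : ∀ p, ∀ t ∈ I, b p t ∈ Ω)
    (hbdist : ∀ t ∈ I, ∀ p q : Fin Q, p ≠ q → b p t ≠ b q t)
    (hσ : ∀ p, ∀ t ∈ I, ∃ k : ℤ, k ≠ 0 ∧ σ p t = 4 * Real.pi * k)
    (hcont : ∀ φ : ℝ × ℝ → ℝ, Continuous φ → HasCompactSupport φ → tsupport φ ⊆ Ω →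
      ContinuousOn (fun t => ∑ p : Fin Q, σ p t * φ (b p t)) I) :
    ∃ π : ℝ → Equiv.Perm (Fin Q),
      ∀ p : Fin Q,
        ContinuousOn (fun t => b (π t p) t) I
          ∧ ∃ c : ℝ, ∀ t ∈ I, σ (π t p) t = c := by
  have hinj : ∀ t ∈ I, Injective (b · t) := fun t ht p q h =>
    by_contra fun hpq => hbdist t ht p q hpq h
  have hmatch := fun t (ht : t ∈ I) ε (hε : 0 < ε) =>
    eventually_exists_perm_dist_lt_and_eq hΩ (by positivity) hσ hcont ht (fun p => hbΩ p t ht)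
      (hinj t ht) hε
  obtain ⟨π, hπ⟩ := ContinuousOnUpToPerm.exists_continuousRelabeling
    (fun t ht ε hε => (hmatch t ht ε hε).mono fun _ ⟨a, ha⟩ => ⟨a, fun p => (ha p).1⟩) hI hinj
  refine ⟨π, fun p => ⟨hπ p, ?_⟩⟩
  rcases I.eq_empty_or_nonempty with rfl | ⟨t₀, ht₀⟩
  · exact ⟨0, fun t ht => ht.elim⟩
  exact ⟨_, fun t ht => hπ.apply_eq_of_eventually_exists_perm hI.isPreconnected hinj
    hmatch p ht ht₀⟩
end

section
/- Let ν : [t₁,t₂] → ℕ be a function with ν(t) = number of atoms of a weak*-continuous curve of atomic signed measures λ(t) on Ω with atom masses in 4πℤ \ {0}, and let t₀ ∈ (t₁, t₂) attain the maximum of ν. Then there exists an open interval I ∋ t₀ with ν(t) = ν(t₀) for all t ∈ I. -/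
/-- local constancy of the number of atoms at a time maximizing it.
Atomic signed measures are encoded as finitely supported weight functions
`c t : (ℝ × ℝ) →₀ ℝ`, with atoms in `Ω` and masses in `4πℤ \ {0}`, and
`ν(t)` is the number of atoms of `λ(t) = Σ_x (c t)(x) δ_x`. -/
theorem atoms_locally_constant_at_max
    (Ω : Set (ℝ × ℝ)) (hΩ : IsOpen Ω) (t₁ t₂ : ℝ) (ht : t₁ < t₂)
    (c : ℝ → ((ℝ × ℝ) →₀ ℝ))
    (hmass : ∀ t ∈ Set.Icc t₁ t₂, ∀ x ∈ (c t).support,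
      x ∈ Ω ∧ ∃ k : ℤ, k ≠ 0 ∧ c t x = 4 * Real.pi * k)
    (hcont : ∀ φ : ℝ × ℝ → ℝ, Continuous φ → HasCompactSupport φ → tsupport φ ⊆ Ω →
      ContinuousOn (fun t => (c t).sum fun x v => v * φ x) (Set.Icc t₁ t₂))
    (t₀ : ℝ) (ht₀ : t₀ ∈ Set.Ioo t₁ t₂)
    (hmax : ∀ t ∈ Set.Ioo t₁ t₂, (c t).support.card ≤ (c t₀).support.card) :
    ∃ I : Set ℝ, IsOpen I ∧ t₀ ∈ I ∧
      ∀ t ∈ I ∩ Set.Ioo t₁ t₂, (c t).support.card = (c t₀).support.card := by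
  classical
  have ht₀Icc : t₀ ∈ Set.Icc t₁ t₂ := Set.Ioo_subset_Icc_self ht₀
  set S := (c t₀).support with hSdef
  -- choose radii: small closed balls around atoms, inside Ω and mutually far apart
  have hrad : ∀ x : ℝ × ℝ, ∃ ε : ℝ, 0 < ε ∧ (x ∈ S →
      Metric.closedBall x ε ⊆ Ω ∧ ∀ y ∈ S, y ≠ x → 2 * ε ≤ dist x y) := by
    intro x
    by_cases hx : x ∈ S
    · have hxΩ : x ∈ Ω := (hmass t₀ ht₀Icc x hx).1
      obtain ⟨r, hr, hball⟩ := Metric.isOpen_iff.1 hΩ x hxΩ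
      by_cases hne : (S.erase x).Nonempty
      · have hd0 : 0 < (S.erase x).inf' hne (fun y => dist x y) := by
          rw [Finset.lt_inf'_iff]
          intro y hy
          exact dist_pos.2 fun h => (Finset.mem_erase.1 hy).1 h.symm
        refine ⟨min (r/2) ((S.erase x).inf' hne (fun y => dist x y) / 2),
          by positivity, fun _ => ⟨?_, ?_⟩⟩
        · refine (Metric.closedBall_subset_ball ?_).trans hball
          calc min (r/2) _ ≤ r/2 := min_le_left _ _
            _ < r := by linarith
        · intro y hy hyx
          have h1 : min (r/2) ((S.erase x).inf' hne (fun y => dist x y) / 2)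
              ≤ (S.erase x).inf' hne (fun y => dist x y) / 2 := min_le_right _ _
          have h2 : (S.erase x).inf' hne (fun y => dist x y) ≤ dist x y :=
            Finset.inf'_le _ (Finset.mem_erase.2 ⟨hyx, hy⟩)
          linarith
      · refine ⟨min (r/2) 1, by positivity, fun _ => ⟨?_, ?_⟩⟩
        · refine (Metric.closedBall_subset_ball ?_).trans hball
          calc min (r/2) 1 ≤ r/2 := min_le_left _ _
            _ < r := by linarith
        · intro y hy hyx
          exact (hne ⟨y, Finset.mem_erase.2 ⟨hyx, hy⟩⟩).elim
    · exact ⟨1, one_pos, fun h => absurd h hx⟩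
  choose ε hε0 hεP using hrad
  -- bump functions
  set Φ : (ℝ × ℝ) → (ℝ × ℝ) → ℝ := fun x y => max 0 (1 - dist y x / ε x) with hΦdef
  have hΦcont : ∀ x, Continuous (Φ x) := fun x =>
    continuous_const.max (continuous_const.sub ((continuous_id.dist continuous_const).div_const _))
  have hΦself : ∀ x, Φ x x = 1 := by
    intro x
    simp [hΦdef, dist_self]
  have hΦne : ∀ x y, Φ x y ≠ 0 → dist y x < ε x := by
    intro x y h
    by_contra hc
    push_neg at hc
    apply h
    have : (1 : ℝ) ≤ dist y x / ε x := (one_le_div (hε0 x)).2 hc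
    simp only [hΦdef]
    rw [max_eq_left (by linarith)]
  have htsupp : ∀ x, tsupport (Φ x) ⊆ Metric.closedBall x (ε x) := by
    intro x
    refine closure_minimal ?_ Metric.isClosed_closedBall
    intro y hy
    exact Metric.mem_closedBall.2 (le_of_lt (hΦne x y hy))
  have hΦcpt : ∀ x, HasCompactSupport (Φ x) := fun x =>
    IsCompact.of_isClosed_subset (isCompact_closedBall x (ε x)) isClosed_closure (htsupp x)
  -- value of the pairing at t₀
  have hft₀ : ∀ x ∈ S, ((c t₀).sum fun y v => v * Φ x y) = c t₀ x := by
    intro x hx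
    rw [Finsupp.sum_eq_single x ?_ ?_]
    · rw [hΦself, mul_one]
    · intro b hb hbx
      have hdist : 2 * ε x ≤ dist x b :=
        ((hεP x hx).2) b (Finsupp.mem_support_iff.2 hb) hbx
      have : Φ x b = 0 := by
        by_contra h
        have := hΦne x b h
        rw [dist_comm] at this
        have := hε0 x
        linarith
      rw [this, mul_zero]
    · intro _
      rw [zero_mul]
  -- open neighborhoods where each pairing stays nonzero
  have hU : ∀ x, ∃ U : Set ℝ, IsOpen U ∧ t₀ ∈ U ∧ (x ∈ S →
      ∀ t ∈ U, ((c t).sum fun y v => v * Φ x y) ≠ 0) := by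
    intro x
    by_cases hx : x ∈ S
    · have hca : ContinuousAt (fun t => (c t).sum fun y v => v * Φ x y) t₀ :=
        ((hcont (Φ x) (hΦcont x) (hΦcpt x) ((htsupp x).trans ((hεP x hx).1))) t₀
          ht₀Icc).continuousAt (Icc_mem_nhds ht₀.1 ht₀.2)
      have hne0 : ((c t₀).sum fun y v => v * Φ x y) ≠ 0 := by
        rw [hft₀ x hx]
        exact Finsupp.mem_support_iff.1 hx
      have hev : ∀ᶠ t in nhds t₀, ((c t).sum fun y v => v * Φ x y) ≠ 0 :=
        hca.eventually_ne hne0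
      obtain ⟨U, hUsub, hUopen, hUt₀⟩ := mem_nhds_iff.1 hev
      exact ⟨U, hUopen, hUt₀, fun _ t ht' => hUsub ht'⟩
    · exact ⟨Set.univ, isOpen_univ, Set.mem_univ _, fun h => absurd h hx⟩
  choose U hUopen hUt₀ hUne using hU
  refine ⟨⋂ x ∈ S, U x, isOpen_biInter_finset fun x _ => hUopen x,
    Set.mem_iInter₂.2 fun x _ => hUt₀ x, ?_⟩
  rintro t ⟨htI, htIoo⟩
  refine le_antisymm (hmax t htIoo) ?_
  -- build an injection from the atoms of c t₀ to those of c t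
  have hwit : ∀ x, ∃ y, x ∈ S → y ∈ (c t).support ∧ dist y x < ε x := by
    intro x
    by_cases hx : x ∈ S
    · have hne0 := hUne x hx t (Set.mem_iInter₂.1 htI x hx)
      rw [Finsupp.sum] at hne0
      obtain ⟨y, hy, hyne⟩ := Finset.exists_ne_zero_of_sum_ne_zero hne0
      refine ⟨y, fun _ => ⟨hy, hΦne x y ?_⟩⟩
      intro h
      exact hyne (by rw [h, mul_zero])
    · exact ⟨x, fun h => absurd h hx⟩
  choose g hg using hwit
  refine Finset.card_le_card_of_injOn g (fun a ha => (hg a ha).1) ?_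
  intro a ha b hb hab
  by_contra hne'
  simp only [Finset.coe_sort_coe, Finset.mem_coe] at ha hb
  have h1 : dist (g a) a < ε a := (hg a ha).2
  have h2 : dist (g b) b < ε b := (hg b hb).2
  have hda : 2 * ε a ≤ dist a b := ((hεP a ha).2) b hb (Ne.symm hne')
  have hdb : 2 * ε b ≤ dist b a := ((hεP b hb).2) a ha hne'
  rw [hab] at h1
  rw [dist_comm b a] at hdb
  have htri : dist a b ≤ dist (g b) a + dist (g b) b := by
    calc dist a b ≤ dist a (g b) + dist (g b) b := dist_triangle _ _ _
      _ = dist (g b) a + dist (g b) b := by rw [dist_comm a (g b)]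
  linarith [dist_comm b (g b)]
end
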